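/- For all 0 < ε < 1, for all 0 < γ₃ < γ₄ < γ₅ < γ₄ + ε(γ₄ − γ₃), for all sufficiently large integers r, and for all V > 0, there exists N₀ ∈ ℕ with the following property: for every N ≥ N₀ and every tree Γ of height N with H_r^{γ₄}(Γ) ≥ V in which every node has at most r^{γ₅} children, there exists a subtree Γ' of Γ such that every node Q of Γ' of height at least N₀ has (r^{γ₃}, 1−ε)-fertile ancestry in Γ'. -/

import Mathlib

universe u

/-- The data `(Γ, h, P)` is a tree of height `N`: there is exactly one node of height
`0` (the root), all heights are at most `N`, the parent of a non-root node lies in the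
tree one level up, and every node of height `< N` has a child (i.e. `P(Γ_n) = Γ_{n-1}`
for `1 ≤ n ≤ N`). -/
def IsTree {α : Type u} (N : ℕ) (Γ : Finset α) (h : α → ℕ) (P : α → α) : Prop :=
  (∃! q, q ∈ Γ ∧ h q = 0) ∧
  (∀ q ∈ Γ, h q ≤ N) ∧
  (∀ q ∈ Γ, h q ≠ 0 → P q ∈ Γ ∧ h (P q) = h q - 1) ∧
  (∀ q ∈ Γ, h q < N → ∃ p ∈ Γ, h p = h q + 1 ∧ P p = q)

/-- The children of a node `q`: the nodes of the tree whose parent is `q`. -/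
def children {α : Type u} [DecidableEq α] (Γ : Finset α) (h : α → ℕ) (P : α → α)
    (q : α) : Finset α :=
  Γ.filter fun p => h p ≠ 0 ∧ P p = q

/-- `C` is a cut of the tree `(Γ, h, P)` of height `N`: for every leaf `L`
(node of height `N`), some iterated parent of `L` (possibly `L` itself) lies in `C`. -/
def IsCut {α : Type u} (N : ℕ) (Γ : Finset α) (h : α → ℕ) (P : α → α)
    (C : Finset α) : Prop :=
  C ⊆ Γ ∧ ∀ L ∈ Γ, h L = N → ∃ k ≤ h L, P^[k] L ∈ C

/-- The `γ`-Hausdorff content of the tree `(Γ, h, P)` of height `N` with base `r`: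
the minimum over cuts `C` of `∑_{Q ∈ C} r^{-height(Q) γ}`. -/
noncomputable def treeContent {α : Type u} (N : ℕ) (Γ : Finset α) (h : α → ℕ)
    (P : α → α) (r : ℕ) (γ : ℝ) : ℝ :=
  sInf {v : ℝ | ∃ C : Finset α, IsCut N Γ h P C ∧
    v = ∑ q ∈ C, (r : ℝ) ^ (-(h q : ℝ) * γ)}

/-- The ancestry of a node `Q`: the set `{P^k(Q) : 1 ≤ k ≤ height Q}`. -/
def ancestry {α : Type u} [DecidableEq α] (h : α → ℕ) (P : α → α) (Q : α) : Finset α :=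
  (Finset.Icc 1 (h Q)).image fun k => P^[k] Q

/-- The `c`-fertile ancestors of `Q` in the tree with node set `Γ'`: those ancestors
having at least `c` children in `Γ'`. -/
noncomputable def fertileAnc {α : Type u} [DecidableEq α] (Γ' : Finset α) (h : α → ℕ)
    (P : α → α) (c : ℝ) (Q : α) : Finset α :=
  (ancestry h P Q).filter fun a => c ≤ ((children Γ' h P a).card : ℝ)

/-!
Prune the tree greedily from the root, guided by the content `subtreeContent q` of the subtree
below each node `q`, normalised so that `q` alone has content `1`. At each node, either at least
`r ^ γ₃` children keep the fraction `r ^ (γ₄ - γ₅) / 2` of the content of their parent, and all of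
them are kept (a fertile step), or, as there are at most `r ^ γ₅` children, a child of maximal
content keeps the much larger fraction `r ^ (γ₄ - γ₃) / 2`, and only such children are kept.
If the path from the root to `Q` makes `F` fertile and `I` infertile steps, the content at `Q` is
thus at least `V * (r ^ (γ₄ - γ₅) / 2) ^ F * (r ^ (γ₄ - γ₃) / 2) ^ I`, and it is at most `1`.
As `γ₅ - γ₄ < ε (γ₄ - γ₃)`, for large `r` this forces `I ≤ ε * height Q` as soon as `height Q`
is large compared with `log (1 / V)`.
-/
open Finset Filter

lemma sum_biUnion_le_sum_sum {ι β : Type*} [DecidableEq β] {s : Finset ι} {f : ι → Finset β}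
    {g : β → ℝ} (hg : ∀ b, 0 ≤ g b) :
    ∑ x ∈ s.biUnion f, g x ≤ ∑ i ∈ s, ∑ x ∈ f i, g x := by
  rw [← sup_eq_biUnion]
  refine apply_sup_le_sum (f := fun C => ∑ x ∈ C, g x) sum_empty (fun {C D} => ?_) s
  rw [← sum_union_inter]
  exact le_add_of_nonneg_right (sum_nonneg fun x _ => hg x)

variable {α : Type u}

namespace IsTree

variable {N : ℕ} {Γ : Finset α} {h : α → ℕ} {P : α → α}

lemma iterate_mem (hT : IsTree N Γ h P) {x : α} (hx : x ∈ Γ) :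
    ∀ {k}, k ≤ h x → P^[k] x ∈ Γ ∧ h (P^[k] x) = h x - k
  | 0, _ => ⟨hx, rfl⟩
  | k + 1, hk => by
    obtain ⟨hmem, hheight⟩ := hT.iterate_mem hx (k := k) (by omega)
    obtain ⟨hparent, hparent_height⟩ := hT.2.2.1 _ hmem (by omega)
    rw [Function.iterate_succ_apply']
    exact ⟨hparent, by omega⟩

lemma iterate_height_eq_root (hT : IsTree N Γ h P) {x root : α} (hx : x ∈ Γ)
    (hroot : root ∈ Γ) (hroot0 : h root = 0) : P^[h x] x = root := by
  obtain ⟨hmem, hheight⟩ := hT.iterate_mem hx le_rfl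
  exact hT.1.unique ⟨hmem, by omega⟩ ⟨hroot, hroot0⟩

variable [DecidableEq α]

lemma height_of_mem_children (hT : IsTree N Γ h P) {q p : α} (hp : p ∈ children Γ h P q) :
    h p = h q + 1 := by
  obtain ⟨hpΓ, hp0, rfl⟩ := mem_filter.mp hp
  have := (hT.2.2.1 p hpΓ hp0).2
  omega

lemma rpow_height_of_mem_children (hT : IsTree N Γ h P) (γ : ℝ) {r : ℕ} (hr : 0 < r) {q p : α}
    (hp : p ∈ children Γ h P q) :
    (r : ℝ) ^ (-(h p : ℝ) * γ) = (r : ℝ) ^ (-(h q : ℝ) * γ) * (r : ℝ) ^ (-γ) := by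
  rw [hT.height_of_mem_children hp, ← Real.rpow_add (by exact_mod_cast hr)]
  push_cast
  ring_nf

lemma ancestry_subset (hT : IsTree N Γ h P) {x : α} (hx : x ∈ Γ) : ancestry h P x ⊆ Γ := by
  intro y hy
  obtain ⟨k, hk, rfl⟩ := mem_image.mp hy
  exact (hT.iterate_mem hx (mem_Icc.mp hk).2).1

lemma card_ancestry (hT : IsTree N Γ h P) {x : α} (hx : x ∈ Γ) : #(ancestry h P x) = h x := by
  rw [ancestry, card_image_of_injOn, Nat.card_Icc, Nat.add_sub_cancel]
  intro k hk l hl hkl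
  rw [coe_Icc, Set.mem_Icc] at hk hl
  have hk' := (hT.iterate_mem hx hk.2).2
  have hl' := (hT.iterate_mem hx hl.2).2
  simp only at hkl
  rw [hkl] at hk'
  omega

lemma self_notMem_ancestry (hT : IsTree N Γ h P) {x : α} (hx : x ∈ Γ) :
    x ∉ ancestry h P x := by
  intro hmem
  obtain ⟨k, hk, hkx⟩ := mem_image.mp hmem
  have := (hT.iterate_mem hx (mem_Icc.mp hk).2).2
  rw [hkx] at this
  have := mem_Icc.mp hk
  omega

end IsTree

variable [DecidableEq α]

@[simp]
lemma mem_children {Γ : Finset α} {h : α → ℕ} {P : α → α} {q p : α} :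
    p ∈ children Γ h P q ↔ p ∈ Γ ∧ h p ≠ 0 ∧ P p = q :=
  mem_filter

lemma ancestry_eq_insert {h : α → ℕ} {P : α → α} {x : α} (hx : h (P x) + 1 = h x) :
    ancestry h P x = insert (P x) (ancestry h P (P x)) := by
  ext y
  simp only [ancestry, mem_image, mem_Icc, mem_insert]
  constructor
  · rintro ⟨_ | k, hk, rfl⟩
    · omega
    · rcases k with _ | k
      · exact Or.inl rfl
      · exact Or.inr ⟨k + 1, by omega, rfl⟩
  · rintro (rfl | ⟨k, hk, rfl⟩)
    · exact ⟨1, by omega, rfl⟩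
    · exact ⟨k + 1, by omega, rfl⟩

section Content

variable (Γ : Finset α) (h : α → ℕ) (P : α → α) (r : ℕ) (γ : ℝ)

/-- The recursion computes the `γ`-content of the depth-`m` subtree below `q`, normalised by the
weight `r ^ (-height q * γ)` of `q` itself; the truncation at `1` is the trivial cut `{q}`. -/
noncomputable def relContent : ℕ → α → ℝ
  | 0, _ => 1
  | m + 1, q => min 1 ((r : ℝ) ^ (-γ) * ∑ c ∈ children Γ h P q, relContent m c)

lemma relContent_nonneg : ∀ m q, 0 ≤ relContent Γ h P r γ m q
  | 0, _ => zero_le_one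
  | m + 1, q => le_min zero_le_one <| mul_nonneg (by positivity) <|
      sum_nonneg fun c _ => relContent_nonneg m c

lemma relContent_le_one : ∀ m q, relContent Γ h P r γ m q ≤ 1
  | 0, _ => le_rfl
  | _ + 1, _ => min_le_left _ _

variable {Γ h P r}

lemma exists_cut_below {N : ℕ} (hT : IsTree N Γ h P) (hr : 0 < r) :
    ∀ m, ∀ q ∈ Γ, h q + m = N → ∃ C ⊆ Γ,
      (∀ L ∈ Γ, h L = N → P^[m] L = q → ∃ k ≤ m, P^[k] L ∈ C) ∧
      ∑ x ∈ C, (r : ℝ) ^ (-(h x : ℝ) * γ) ≤ (r : ℝ) ^ (-(h q : ℝ) * γ) * relContent Γ h P r γ m q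
  | 0, q, hq, _ => ⟨{q}, singleton_subset_iff.mpr hq,
      fun _ _ _ hL => ⟨0, le_rfl, mem_singleton.mpr hL⟩, by simp [relContent]⟩
  | m + 1, q, hq, hqm => by
    by_cases htrivial : 1 ≤ (r : ℝ) ^ (-γ) * ∑ c ∈ children Γ h P q, relContent Γ h P r γ m c
    · refine ⟨{q}, singleton_subset_iff.mpr hq,
        fun _ _ _ hL => ⟨m + 1, le_rfl, mem_singleton.mpr hL⟩, ?_⟩
      simp [relContent, min_eq_left htrivial]
    have hcut : ∀ c ∈ children Γ h P q, ∃ C ⊆ Γ,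
        (∀ L ∈ Γ, h L = N → P^[m] L = c → ∃ k ≤ m, P^[k] L ∈ C) ∧
        ∑ x ∈ C, (r : ℝ) ^ (-(h x : ℝ) * γ) ≤
          (r : ℝ) ^ (-(h c : ℝ) * γ) * relContent Γ h P r γ m c := fun c hc =>
      exists_cut_below hT hr m c (mem_children.mp hc).1 (by
        have := hT.height_of_mem_children hc; omega)
    choose! C hCΓ hChit hCsum using hcut
    refine ⟨(children Γ h P q).biUnion C, biUnion_subset.mpr fun c hc => hCΓ c hc, ?_, ?_⟩
    · intro L hL hLN hLq
      obtain ⟨hcΓ, hch⟩ := hT.iterate_mem hL (k := m) (by omega)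
      have hc : P^[m] L ∈ children Γ h P q :=
        mem_children.mpr ⟨hcΓ, by omega, (Function.iterate_succ_apply' P m L).symm.trans hLq⟩
      obtain ⟨k, hk, hkC⟩ := hChit _ hc L hL hLN rfl
      exact ⟨k, by omega, mem_biUnion.mpr ⟨_, hc, hkC⟩⟩
    · calc ∑ x ∈ (children Γ h P q).biUnion C, (r : ℝ) ^ (-(h x : ℝ) * γ)
          ≤ ∑ c ∈ children Γ h P q, ∑ x ∈ C c, (r : ℝ) ^ (-(h x : ℝ) * γ) :=
            sum_biUnion_le_sum_sum fun _ => by positivity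
        _ ≤ ∑ c ∈ children Γ h P q, (r : ℝ) ^ (-(h c : ℝ) * γ) * relContent Γ h P r γ m c :=
            sum_le_sum hCsum
        _ = (r : ℝ) ^ (-(h q : ℝ) * γ) * relContent Γ h P r γ (m + 1) q := by
            rw [relContent, min_eq_right (not_le.mp htrivial).le, mul_sum, mul_sum]
            exact sum_congr rfl fun c hc => by
              rw [hT.rpow_height_of_mem_children γ hr hc, mul_assoc]

lemma treeContent_le_relContent {N : ℕ} (hT : IsTree N Γ h P) (hr : 0 < r) {root : α}
    (hroot : root ∈ Γ) (hroot0 : h root = 0) :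
    treeContent N Γ h P r γ ≤ relContent Γ h P r γ N root := by
  obtain ⟨C, hCΓ, hChit, hCsum⟩ := exists_cut_below γ hT hr N root hroot (by omega)
  have hcut : IsCut N Γ h P C := ⟨hCΓ, fun L hL hLN => by
    obtain ⟨k, hk, hkC⟩ := hChit L hL hLN (hLN ▸ hT.iterate_height_eq_root hL hroot hroot0)
    exact ⟨k, hLN ▸ hk, hkC⟩⟩
  have hbdd : BddBelow {v : ℝ | ∃ C : Finset α, IsCut N Γ h P C ∧
      v = ∑ q ∈ C, (r : ℝ) ^ (-(h q : ℝ) * γ)} := ⟨0, by rintro _ ⟨_, -, rfl⟩; positivity⟩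
  exact (csInf_le hbdd ⟨C, hcut, rfl⟩).trans (by simpa [hroot0] using hCsum)

noncomputable def subtreeContent (N : ℕ) (Γ : Finset α) (h : α → ℕ) (P : α → α) (r : ℕ) (γ : ℝ)
    (q : α) : ℝ :=
  relContent Γ h P r γ (N - h q) q

lemma subtreeContent_eq {N : ℕ} (hT : IsTree N Γ h P) {q : α} (hqN : h q < N) :
    subtreeContent N Γ h P r γ q =
      min 1 ((r : ℝ) ^ (-γ) * ∑ c ∈ children Γ h P q, subtreeContent N Γ h P r γ c) := by
  have hsucc : N - h q = (N - h q - 1) + 1 := by omega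
  rw [subtreeContent, hsucc, relContent]
  congr 2
  refine sum_congr rfl fun c hc => ?_
  rw [subtreeContent, hT.height_of_mem_children hc, Nat.sub_add_eq]

end Content

section Pruning

variable (N : ℕ) (Γ : Finset α) (h : α → ℕ) (P : α → α) (r : ℕ) (γ₃ γ₄ γ₅ : ℝ)

noncomputable def heavyChildren (q : α) : Finset α :=
  (children Γ h P q).filter fun c =>
    (r : ℝ) ^ (γ₄ - γ₅) / 2 * subtreeContent N Γ h P r γ₄ q ≤ subtreeContent N Γ h P r γ₄ c

abbrev IsFertileStep (q : α) : Prop :=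
  (r : ℝ) ^ γ₃ ≤ #(heavyChildren N Γ h P r γ₄ γ₅ q)

noncomputable def maxChildren (q : α) : Finset α :=
  (children Γ h P q).filter fun c =>
    ∀ c' ∈ children Γ h P q, subtreeContent N Γ h P r γ₄ c' ≤ subtreeContent N Γ h P r γ₄ c

noncomputable def selectedChildren (q : α) : Finset α :=
  if IsFertileStep N Γ h P r γ₃ γ₄ γ₅ q then heavyChildren N Γ h P r γ₄ γ₅ q
  else maxChildren N Γ h P r γ₄ q

noncomputable def stepRatio (q : α) : ℝ :=
  if IsFertileStep N Γ h P r γ₃ γ₄ γ₅ q then (r : ℝ) ^ (γ₄ - γ₅) / 2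
  else (r : ℝ) ^ (γ₄ - γ₃) / 2

noncomputable def prune : Finset α :=
  Γ.filter fun x => ∀ k < h x, P^[k] x ∈ selectedChildren N Γ h P r γ₃ γ₄ γ₅ (P^[k + 1] x)

variable {N Γ h P r γ₃ γ₄ γ₅}

lemma stepRatio_nonneg (q : α) : 0 ≤ stepRatio N Γ h P r γ₃ γ₄ γ₅ q := by
  unfold stepRatio
  split_ifs <;> positivity

lemma selectedChildren_subset (q : α) :
    selectedChildren N Γ h P r γ₃ γ₄ γ₅ q ⊆ children Γ h P q := by
  unfold selectedChildren
  split_ifs <;> exact filter_subset _ _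

lemma sum_heavyChildren_ge (hT : IsTree N Γ h P) (hr : 0 < r) {q : α} (hqN : h q < N)
    (hcard : (#(children Γ h P q) : ℝ) ≤ (r : ℝ) ^ γ₅) :
    (r : ℝ) ^ γ₄ * subtreeContent N Γ h P r γ₄ q / 2 ≤
      ∑ c ∈ heavyChildren N Γ h P r γ₄ γ₅ q, subtreeContent N Γ h P r γ₄ c := by
  have hrpos : (0 : ℝ) < r := by exact_mod_cast hr
  set content := subtreeContent N Γ h P r γ₄
  set threshold := (r : ℝ) ^ (γ₄ - γ₅) / 2 * content q with hthreshold_def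
  have hthreshold : 0 ≤ threshold :=
    mul_nonneg (by positivity) (relContent_nonneg _ _ _ _ _ _ _)
  have htotal : (r : ℝ) ^ γ₄ * content q ≤ ∑ c ∈ children Γ h P q, content c := by
    have := (subtreeContent_eq (r := r) γ₄ hT hqN).le.trans (min_le_right _ _)
    rwa [Real.rpow_neg hrpos.le, le_inv_mul_iff₀ (by positivity)] at this
  have hlight : ∑ c ∈ children Γ h P q with ¬ threshold ≤ content c, content c ≤
      (r : ℝ) ^ γ₄ * content q / 2 :=
    calc ∑ c ∈ children Γ h P q with ¬ threshold ≤ content c, content c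
        ≤ #{c ∈ children Γ h P q | ¬ threshold ≤ content c} • threshold :=
          sum_le_card_nsmul _ _ _ fun c hc => (not_le.mp (mem_filter.mp hc).2).le
      _ ≤ (r : ℝ) ^ γ₅ * threshold := by
          rw [nsmul_eq_mul]
          gcongr
          exact le_trans (by exact_mod_cast card_filter_le _ _) hcard
      _ = (r : ℝ) ^ γ₄ * content q / 2 := by
          rw [hthreshold_def, Real.rpow_sub hrpos]
          field_simp
  rw [← sum_filter_add_sum_filter_not _ (fun c => threshold ≤ content c)] at htotal
  unfold heavyChildren
  linarith

lemma stepRatio_mul_le (hT : IsTree N Γ h P) (hr : 0 < r) {q c : α} (hqN : h q < N)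
    (hcard : (#(children Γ h P q) : ℝ) ≤ (r : ℝ) ^ γ₅)
    (hc : c ∈ selectedChildren N Γ h P r γ₃ γ₄ γ₅ q) :
    stepRatio N Γ h P r γ₃ γ₄ γ₅ q * subtreeContent N Γ h P r γ₄ q ≤
      subtreeContent N Γ h P r γ₄ c := by
  have hrpos : (0 : ℝ) < r := by exact_mod_cast hr
  set content := subtreeContent N Γ h P r γ₄
  unfold selectedChildren at hc
  unfold stepRatio
  split_ifs at hc ⊢ with hfertile
  · exact (mem_filter.mp hc).2
  obtain ⟨-, hcmax⟩ := mem_filter.mp hc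
  have hheavy : ∑ c' ∈ heavyChildren N Γ h P r γ₄ γ₅ q, content c' ≤
      #(heavyChildren N Γ h P r γ₄ γ₅ q) • content c :=
    sum_le_card_nsmul _ _ _ fun c' hc' => hcmax c' (mem_filter.mp hc').1
  rw [nsmul_eq_mul] at hheavy
  have hfew : (#(heavyChildren N Γ h P r γ₄ γ₅ q) : ℝ) * content c ≤ (r : ℝ) ^ γ₃ * content c :=
    mul_le_mul_of_nonneg_right (not_le.mp hfertile).le (relContent_nonneg _ _ _ _ _ _ _)
  have hsum := sum_heavyChildren_ge (γ₄ := γ₄) hT hr hqN hcard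
  calc (r : ℝ) ^ (γ₄ - γ₃) / 2 * content q = (r : ℝ) ^ γ₄ * content q / 2 / (r : ℝ) ^ γ₃ := by
        rw [Real.rpow_sub hrpos]
        ring
    _ ≤ content c := by
        rw [div_le_iff₀ (by positivity)]
        linarith

lemma selectedChildren_nonempty (hT : IsTree N Γ h P) (hr : 0 < r) {q : α} (hq : q ∈ Γ)
    (hqN : h q < N) : (selectedChildren N Γ h P r γ₃ γ₄ γ₅ q).Nonempty := by
  unfold selectedChildren
  split_ifs with hfertile
  · have hpos := (Real.rpow_pos_of_pos (Nat.cast_pos.mpr hr) γ₃).trans_le hfertile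
    exact card_pos.mp (by exact_mod_cast hpos)
  · obtain ⟨p, hp, hp1, hpq⟩ := hT.2.2.2 q hq hqN
    obtain ⟨c, hc, hcmax⟩ := exists_max_image (children Γ h P q)
      (subtreeContent N Γ h P r γ₄) ⟨p, mem_children.mpr ⟨hp, by omega, hpq⟩⟩
    exact ⟨c, mem_filter.mpr ⟨hc, hcmax⟩⟩

lemma mem_prune_of_mem_selectedChildren (hT : IsTree N Γ h P) {x c : α}
    (hx : x ∈ prune N Γ h P r γ₃ γ₄ γ₅) (hc : c ∈ selectedChildren N Γ h P r γ₃ γ₄ γ₅ x) :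
    c ∈ prune N Γ h P r γ₃ γ₄ γ₅ := by
  have hchild := selectedChildren_subset x hc
  obtain ⟨hcΓ, -, hcx⟩ := mem_children.mp hchild
  have hheight := hT.height_of_mem_children hchild
  refine mem_filter.mpr ⟨hcΓ, ?_⟩
  rintro (_ | k) hk
  · simpa [hcx] using hc
  · simp only [Function.iterate_succ_apply, hcx]
    exact (mem_filter.mp hx).2 k (by omega)

lemma parent_mem_prune (hT : IsTree N Γ h P) {x : α} (hx : x ∈ prune N Γ h P r γ₃ γ₄ γ₅)
    (hx0 : h x ≠ 0) : P x ∈ prune N Γ h P r γ₃ γ₄ γ₅ := by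
  obtain ⟨hxΓ, hselected⟩ := mem_filter.mp hx
  obtain ⟨hPx, hPx_height⟩ := hT.2.2.1 x hxΓ hx0
  refine mem_filter.mpr ⟨hPx, fun k hk => ?_⟩
  simpa only [Function.iterate_succ_apply] using hselected (k + 1) (by omega)

lemma selectedChildren_subset_children_prune (hT : IsTree N Γ h P) {x : α}
    (hx : x ∈ prune N Γ h P r γ₃ γ₄ γ₅) :
    selectedChildren N Γ h P r γ₃ γ₄ γ₅ x ⊆ children (prune N Γ h P r γ₃ γ₄ γ₅) h P x :=
  fun _ hc => mem_children.mpr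
    ⟨mem_prune_of_mem_selectedChildren hT hx hc, (mem_children.mp (selectedChildren_subset x hc)).2⟩

lemma isTree_prune (hT : IsTree N Γ h P) (hr : 0 < r) :
    IsTree N (prune N Γ h P r γ₃ γ₄ γ₅) h P := by
  obtain ⟨root, ⟨hroot, hroot0⟩, hunique⟩ := hT.1
  refine ⟨⟨root, ⟨mem_filter.mpr ⟨hroot, fun k hk => by omega⟩, hroot0⟩,
      fun y hy => hunique y ⟨(mem_filter.mp hy.1).1, hy.2⟩⟩,
    fun q hq => hT.2.1 q (mem_filter.mp hq).1,
    fun q hq hq0 => ⟨parent_mem_prune hT hq hq0, (hT.2.2.1 q (mem_filter.mp hq).1 hq0).2⟩,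
    fun q hq hqN => ?_⟩
  obtain ⟨c, hc⟩ := selectedChildren_nonempty hT hr (mem_filter.mp hq).1 hqN
  have hchild := selectedChildren_subset q hc
  exact ⟨c, mem_prune_of_mem_selectedChildren hT hq hc, hT.height_of_mem_children hchild,
    (mem_children.mp hchild).2.2⟩

lemma filter_isFertileStep_ancestry_subset (hT : IsTree N Γ h P) (hr : 0 < r) {Q : α}
    (hQ : Q ∈ prune N Γ h P r γ₃ γ₄ γ₅) :
    (ancestry h P Q).filter (IsFertileStep N Γ h P r γ₃ γ₄ γ₅) ⊆
      fertileAnc (prune N Γ h P r γ₃ γ₄ γ₅) h P ((r : ℝ) ^ γ₃) Q := by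
  intro a ha
  obtain ⟨ha_anc, hfertile⟩ := mem_filter.mp ha
  have ha_prune := (isTree_prune hT hr).ancestry_subset hQ ha_anc
  have hselected := selectedChildren_subset_children_prune hT ha_prune
  rw [selectedChildren, if_pos hfertile] at hselected
  exact mem_filter.mpr ⟨ha_anc, hfertile.trans (by exact_mod_cast card_le_card hselected)⟩

lemma subtreeContent_mul_prod_stepRatio_le (hT : IsTree N Γ h P) (hr : 0 < r)
    (hcard : ∀ q ∈ Γ, (#(children Γ h P q) : ℝ) ≤ (r : ℝ) ^ γ₅) {root : α} (hroot : root ∈ Γ)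
    (hroot0 : h root = 0) {Q : α} (hQ : Q ∈ prune N Γ h P r γ₃ γ₄ γ₅) :
    subtreeContent N Γ h P r γ₄ root * ∏ a ∈ ancestry h P Q, stepRatio N Γ h P r γ₃ γ₄ γ₅ a ≤
      subtreeContent N Γ h P r γ₄ Q := by
  induction hn : h Q generalizing Q with
  | zero =>
    have hQroot : Q = root := hT.1.unique ⟨(mem_filter.mp hQ).1, hn⟩ ⟨hroot, hroot0⟩
    subst hQroot
    simp [ancestry, hroot0]
  | succ n ih =>
    have hQΓ := (mem_filter.mp hQ).1
    obtain ⟨hPQ, hPQ_height⟩ := hT.2.2.1 Q hQΓ (by omega)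
    have hQ_selected : Q ∈ selectedChildren N Γ h P r γ₃ γ₄ γ₅ (P Q) := by
      simpa using (mem_filter.mp hQ).2 0 (by omega)
    rw [ancestry_eq_insert (by omega), prod_insert (hT.self_notMem_ancestry hPQ),
      mul_left_comm]
    calc stepRatio N Γ h P r γ₃ γ₄ γ₅ (P Q) *
          (subtreeContent N Γ h P r γ₄ root *
            ∏ a ∈ ancestry h P (P Q), stepRatio N Γ h P r γ₃ γ₄ γ₅ a)
        ≤ stepRatio N Γ h P r γ₃ γ₄ γ₅ (P Q) * subtreeContent N Γ h P r γ₄ (P Q) :=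
          mul_le_mul_of_nonneg_left (ih (parent_mem_prune hT hQ (by omega)) (by omega))
            (stepRatio_nonneg _)
      _ ≤ subtreeContent N Γ h P r γ₄ Q :=
          stepRatio_mul_le hT hr (by have := hT.2.1 Q hQΓ; omega) (hcard _ hPQ) hQ_selected

lemma mul_prod_stepRatio_le_one (hT : IsTree N Γ h P) (hr : 0 < r)
    (hcard : ∀ q ∈ Γ, (#(children Γ h P q) : ℝ) ≤ (r : ℝ) ^ γ₅) {V : ℝ}
    (hV : V ≤ treeContent N Γ h P r γ₄) {Q : α} (hQ : Q ∈ prune N Γ h P r γ₃ γ₄ γ₅) :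
    V * ∏ a ∈ ancestry h P Q, stepRatio N Γ h P r γ₃ γ₄ γ₅ a ≤ 1 := by
  obtain ⟨root, ⟨hroot, hroot0⟩, -⟩ := hT.1
  have hVroot : V ≤ subtreeContent N Γ h P r γ₄ root := by
    simpa [subtreeContent, hroot0] using hV.trans (treeContent_le_relContent γ₄ hT hr hroot hroot0)
  calc V * ∏ a ∈ ancestry h P Q, stepRatio N Γ h P r γ₃ γ₄ γ₅ a
      ≤ subtreeContent N Γ h P r γ₄ root * ∏ a ∈ ancestry h P Q, stepRatio N Γ h P r γ₃ γ₄ γ₅ a :=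
        mul_le_mul_of_nonneg_right hVroot (prod_nonneg fun a _ => stepRatio_nonneg a)
    _ ≤ subtreeContent N Γ h P r γ₄ Q :=
        subtreeContent_mul_prod_stepRatio_le hT hr hcard hroot hroot0 hQ
    _ ≤ 1 := relContent_le_one _ _ _ _ _ _ _

lemma prod_stepRatio (s : Finset α) :
    ∏ a ∈ s, stepRatio N Γ h P r γ₃ γ₄ γ₅ a =
      ((r : ℝ) ^ (γ₄ - γ₅) / 2) ^ #(s.filter (IsFertileStep N Γ h P r γ₃ γ₄ γ₅)) *
      ((r : ℝ) ^ (γ₄ - γ₃) / 2) ^ #(s.filter fun a => ¬ IsFertileStep N Γ h P r γ₃ γ₄ γ₅ a) := by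
  unfold stepRatio
  rw [prod_ite, prod_const, prod_const]

end Pruning

lemma exists_exponent_gap {ε γ₃ γ₄ γ₅ : ℝ} (hε : ε < 1) (h34 : γ₃ < γ₄) (h45 : γ₄ < γ₅)
    (h5e : γ₅ < γ₄ + ε * (γ₄ - γ₃)) :
    ∃ ε', 0 ≤ ε' ∧ ε' < ε ∧ ∀ᶠ r : ℕ in atTop, 0 < r ∧ 2 ≤ (r : ℝ) ^ (γ₄ - γ₃) / 2 ∧
      ((r : ℝ) ^ (γ₄ - γ₃) / 2) ^ (-ε') ≤ (r : ℝ) ^ (γ₄ - γ₅) / 2 := by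
  have h43 : 0 < γ₄ - γ₃ := sub_pos.mpr h34
  obtain ⟨ρ, hρ0, hρε, hρ⟩ : ∃ ρ, 0 < ρ ∧ ρ < ε ∧ ρ * (γ₄ - γ₃) = γ₅ - γ₄ :=
    ⟨_, div_pos (sub_pos.mpr h45) h43, (div_lt_iff₀ h43).mpr (by linarith),
      div_mul_cancel₀ _ h43.ne'⟩
  obtain ⟨ε', hρε', hε'ε⟩ := exists_between hρε
  obtain ⟨δ, hδ_def⟩ : ∃ δ, δ = (ε' - ρ) * (γ₄ - γ₃) := ⟨_, rfl⟩
  have hδ : 0 < δ := hδ_def ▸ mul_pos (sub_pos.mpr hρε') h43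
  have hδ43 : δ ≤ γ₄ - γ₃ := hδ_def ▸ mul_le_of_le_one_left h43.le (by linarith)
  refine ⟨ε', by linarith, hε'ε, ?_⟩
  have hlarge : ∀ᶠ r : ℕ in atTop, 4 ≤ (r : ℝ) ^ δ :=
    ((tendsto_rpow_atTop hδ).comp tendsto_natCast_atTop_atTop).eventually_ge_atTop 4
  filter_upwards [hlarge, eventually_ge_atTop 1] with r hrδ hr1
  have hr1' : (1 : ℝ) ≤ r := by exact_mod_cast hr1
  have hrpos : (0 : ℝ) < r := by positivity
  have hB : 4 ≤ (r : ℝ) ^ (γ₄ - γ₃) := hrδ.trans (Real.rpow_le_rpow_of_exponent_le hr1' hδ43)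
  refine ⟨hr1, by linarith, ?_⟩
  have htwo : (2 : ℝ) ^ ε' ≤ 2 := by
    simpa using Real.rpow_le_rpow_of_exponent_le one_le_two (show ε' ≤ 1 by linarith)
  calc ((r : ℝ) ^ (γ₄ - γ₃) / 2) ^ (-ε') = (r : ℝ) ^ ((γ₄ - γ₃) * -ε') * 2 ^ ε' := by
        rw [Real.div_rpow (by positivity) zero_le_two, ← Real.rpow_mul hrpos.le,
          Real.rpow_neg zero_le_two, div_inv_eq_mul]
    _ ≤ (r : ℝ) ^ ((γ₄ - γ₃) * -ε') * ((r : ℝ) ^ δ / 2) := by gcongr; linarith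
    _ = (r : ℝ) ^ (γ₄ - γ₅) / 2 := by
        rw [← mul_div_assoc, ← Real.rpow_add hrpos]
        congr 2
        linear_combination hδ_def - hρ

lemma eventually_one_lt_mul_two_rpow {V c : ℝ} (hV : 0 < V) (hc : 0 < c) :
    ∀ᶠ n : ℕ in atTop, 1 < V * (2 : ℝ) ^ (c * n) := by
  have hgrowth := tendsto_pow_atTop_atTop_of_one_lt (Real.one_lt_rpow one_lt_two hc)
  filter_upwards [hgrowth.eventually_gt_atTop V⁻¹] with n hn
  rw [Real.rpow_mul_natCast zero_le_two]
  exact (inv_lt_iff_one_lt_mul₀' hV).mp hn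

lemma natCast_le_mul_of_mul_pow_le {V A B ε ε' : ℝ} {F I n : ℕ} (hV : 0 < V) (hB : 2 ≤ B)
    (hA : B ^ (-ε') ≤ A) (hε' : 0 ≤ ε') (hε'ε : ε' ≤ ε) (hF : F ≤ n)
    (hle : V * (A ^ F * B ^ I) ≤ 1) (hn : 1 < V * 2 ^ ((ε - ε') * n)) : (I : ℝ) ≤ ε * n := by
  by_contra! hI
  have hB1 : 1 ≤ B := by linarith
  have hpow : (2 : ℝ) ^ ((ε - ε') * n) ≤ A ^ F * B ^ I :=
    calc (2 : ℝ) ^ ((ε - ε') * n) ≤ B ^ ((ε - ε') * n) := by gcongr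
      _ = B ^ (-ε' * n) * B ^ (ε * n) := by rw [← Real.rpow_add (by linarith)]; ring_nf
      _ ≤ B ^ (-ε' * F) * B ^ (I : ℝ) := by
          have hFn : (F : ℝ) ≤ n := by exact_mod_cast hF
          exact mul_le_mul (Real.rpow_le_rpow_of_exponent_le hB1 (by nlinarith))
            (Real.rpow_le_rpow_of_exponent_le hB1 hI.le) (by positivity) (by positivity)
      _ ≤ A ^ F * B ^ I := by
          rw [Real.rpow_mul_natCast (by linarith), Real.rpow_natCast]
          gcongr
  nlinarith

theorem subtree_regularity :
    ∀ ε : ℝ, 0 < ε → ε < 1 →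
    ∀ γ₃ γ₄ γ₅ : ℝ, 0 < γ₃ → γ₃ < γ₄ → γ₄ < γ₅ → γ₅ < γ₄ + ε * (γ₄ - γ₃) →
    ∃ r₀ : ℕ, ∀ r : ℕ, r₀ ≤ r →
    ∀ V : ℝ, 0 < V →
    ∃ N₀ : ℕ, ∀ N : ℕ, N₀ ≤ N →
    ∀ (α : Type u) [inst : DecidableEq α],
    ∀ (Γ : Finset α) (h : α → ℕ) (P : α → α),
      IsTree N Γ h P → V ≤ treeContent N Γ h P r γ₄ →
      (∀ q ∈ Γ, ((children Γ h P q).card : ℝ) ≤ (r : ℝ) ^ γ₅) →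
      ∃ Γ' ⊆ Γ, IsTree N Γ' h P ∧
        ∀ Q ∈ Γ', N₀ ≤ h Q →
          (1 - ε) * ((ancestry h P Q).card : ℝ) ≤
            ((fertileAnc Γ' h P ((r : ℝ) ^ γ₃) Q).card : ℝ) := by
  intro ε _ hε1 γ₃ γ₄ γ₅ _ h34 h45 h5e
  obtain ⟨ε', hε'0, hε'ε, hlarge⟩ := exists_exponent_gap hε1 h34 h45 h5e
  obtain ⟨r₀, hr₀⟩ := eventually_atTop.mp hlarge
  refine ⟨r₀, fun r hr V hV => ?_⟩
  obtain ⟨hr0, hB, hAB⟩ := hr₀ r hr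
  obtain ⟨N₀, hN₀⟩ := eventually_atTop.mp (eventually_one_lt_mul_two_rpow hV (sub_pos.mpr hε'ε))
  refine ⟨N₀, fun N _ α _ Γ h P hT hVΓ hcard => ⟨prune N Γ h P r γ₃ γ₄ γ₅, filter_subset _ _,
    isTree_prune hT hr0, fun Q hQ hQN => ?_⟩⟩
  set fertileSteps := (ancestry h P Q).filter (IsFertileStep N Γ h P r γ₃ γ₄ γ₅)
  set infertileSteps := (ancestry h P Q).filter fun a => ¬ IsFertileStep N Γ h P r γ₃ γ₄ γ₅ a
  have hle := mul_prod_stepRatio_le_one hT hr0 hcard hVΓ hQ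
  rw [prod_stepRatio] at hle
  have hinfertile : (#infertileSteps : ℝ) ≤ ε * #(ancestry h P Q) :=
    natCast_le_mul_of_mul_pow_le hV hB hAB hε'0 hε'ε.le (card_filter_le _ _) hle
      (hN₀ _ (hT.card_ancestry (filter_subset _ _ hQ) ▸ hQN))
  have hfertile : (#fertileSteps : ℝ) ≤
      #(fertileAnc (prune N Γ h P r γ₃ γ₄ γ₅) h P ((r : ℝ) ^ γ₃) Q) := by
    exact_mod_cast card_le_card (filter_isFertileStep_ancestry_subset hT hr0 hQ)
  have hsplit : (#fertileSteps : ℝ) + #infertileSteps = #(ancestry h P Q) := by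
    exact_mod_cast card_filter_add_card_filter_not _
  linarith
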